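/- Let A, B be real symmetric n×n matrices forming a non-dissipative pair, with maxrank{A,B} ≥ 3. If A and B are linearly independent, then there exists a point z ∈ ℝⁿ with zᵀAz = 0, zᵀBz = 0, and Az, Bz linearly independent. -/

import Mathlib

/-!
Every nonzero member of `span {A, B}` is indefinite, so by Finsler's lemma (no `B - μ • A` is
positive semidefinite) there are `A`-isotropic vectors `p`, `q` on which the form of `B` takes
opposite signs. If `p ⬝ᵥ A *ᵥ q = 0`, the plane spanned by `p` and `q` is `A`-isotropic and the
form of `B` has a simple zero on it. Otherwise `p`, `q` is a hyperbolic pair for `A`, and since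
`rank A ≥ 3` some `A`-anisotropic `y` is `A`-orthogonal to both; the cone `{z ⬝ᵥ A *ᵥ z = 0}` then
contains a path from `p` to a multiple of `q`, along which the form of `B` changes sign. Either way
we get a common isotropic vector `z₁` outside the common kernel of `span {A, B}`. If `A *ᵥ z₁`,
`B *ᵥ z₁` are dependent, a nonzero `C` in the span kills `z₁`, and adding a suitable multiple of
`z₁` to a regular isotropic vector of the indefinite `C` gives a transversal point. Transversality
only depends on `span {A, B}`, which lets us first replace `A` by a member of rank at least three.
-/

open Matrix

theorem exists_vieta_of_mul_neg {a b c : ℝ} (h : a * c < 0) :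
    ∃ t₁ t₂ : ℝ, t₁ < t₂ ∧ c * (t₁ + t₂) = -2 * b ∧ c * (t₁ * t₂) = a := by
  have hc : c ≠ 0 := by rintro rfl; simp at h
  have hD : 0 < b ^ 2 - a * c := by nlinarith [sq_nonneg b]
  set r := √(b ^ 2 - a * c)
  have hr : r ^ 2 = b ^ 2 - a * c := Real.sq_sqrt hD.le
  have hne : (-b - r) / c ≠ (-b + r) / c := by
    rw [Ne, div_left_inj' hc]; linarith [Real.sqrt_pos.2 hD]
  have hsum : c * ((-b - r) / c + (-b + r) / c) = -2 * b := by field_simp; ring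
  have hprod : c * ((-b - r) / c * ((-b + r) / c)) = a := by
    rw [div_mul_div_comm, show (-b - r) * (-b + r) = a * c by linear_combination -hr]
    field_simp
  rcases hne.lt_or_gt with hlt | hlt
  · exact ⟨_, _, hlt, hsum, hprod⟩
  · exact ⟨_, _, hlt, by rw [add_comm]; exact hsum, by rw [mul_comm ((-b + r) / c)]; exact hprod⟩

theorem finrank_span_pair_le_two {K V : Type*} [DivisionRing K] [AddCommGroup V] [Module K V]
    (a b : V) : Module.finrank K (Submodule.span K {a, b}) ≤ 2 := by
  have := finrank_range_le_card (R := K) ![a, b]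
  rwa [range_cons_cons_empty] at this

theorem span_pair_eq_of_linearIndependent {K V : Type*} [DivisionRing K] [AddCommGroup V]
    [Module K V] {a b c d : V} (hcd : LinearIndependent K ![c, d])
    (hc : c ∈ Submodule.span K {a, b}) (hd : d ∈ Submodule.span K {a, b}) :
    Submodule.span K {c, d} = Submodule.span K {a, b} := by
  have : FiniteDimensional K (Submodule.span K {a, b}) :=
    FiniteDimensional.span_of_finite K (Set.toFinite _)
  have hcd₂ := finrank_span_eq_card hcd
  rw [range_cons_cons_empty, Fintype.card_fin] at hcd₂
  refine Submodule.eq_of_le_of_finrank_le ?_ (hcd₂ ▸ finrank_span_pair_le_two a b)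
  rw [Submodule.span_le]
  rintro x (rfl | rfl) <;> assumption

theorem LinearIndependent.exists_linearIndependent_pair_of_ne_zero {K V : Type*} [Field K]
    [AddCommGroup V] [Module K V] {a b x : V} (hab : LinearIndependent K ![a, b]) (hx : x ≠ 0) :
    ∃ y ∈ ({a, b} : Set V), LinearIndependent K ![x, y] := by
  by_contra! h
  simp only [Set.mem_insert_iff, Set.mem_singleton_iff, forall_eq_or_imp, forall_eq,
    LinearIndependent.pair_iff' hx, not_forall, not_not] at h
  obtain ⟨⟨α, rfl⟩, ⟨β, rfl⟩⟩ := h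
  obtain ⟨rfl, -⟩ := LinearIndependent.pair_iff.1 hab β (-α) (by module)
  simpa using hab.ne_zero 1

variable {ι : Type*} [Fintype ι]

theorem Matrix.IsSymm.dotProduct_mulVec_comm {A : Matrix ι ι ℝ} (hA : A.IsSymm) (x y : ι → ℝ) :
    x ⬝ᵥ A *ᵥ y = y ⬝ᵥ A *ᵥ x := by
  simpa [hA.eq] using dotProduct_transpose_mulVec A x y

theorem Matrix.IsSymm.dotProduct_mulVec_add_smul {A : Matrix ι ι ℝ} (hA : A.IsSymm)
    (x y : ι → ℝ) (t : ℝ) :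
    (x + t • y) ⬝ᵥ A *ᵥ (x + t • y) =
      x ⬝ᵥ A *ᵥ x + 2 * t * (y ⬝ᵥ A *ᵥ x) + t ^ 2 * (y ⬝ᵥ A *ᵥ y) := by
  simp only [mulVec_add, mulVec_smul, dotProduct_add, add_dotProduct, dotProduct_smul,
    smul_dotProduct, smul_eq_mul, hA.dotProduct_mulVec_comm x y]
  ring

theorem Matrix.IsSymm.dotProduct_mulVec_eq_zero_of_isotropic {A : Matrix ι ι ℝ} (hA : A.IsSymm)
    {x y : ι → ℝ} (hx : x ⬝ᵥ A *ᵥ x = 0) (hy : y ⬝ᵥ A *ᵥ y = 0)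
    (hxy : (x + y) ⬝ᵥ A *ᵥ (x + y) = 0) : x ⬝ᵥ A *ᵥ y = 0 := by
  have := hA.dotProduct_mulVec_add_smul x y 1
  rw [one_smul, hxy, hx, hy, hA.dotProduct_mulVec_comm y] at this
  linarith

theorem Matrix.IsSymm.exists_isotropic_add_smul {C : Matrix ι ι ℝ} (hC : C.IsSymm) {x y : ι → ℝ}
    (h : (x ⬝ᵥ C *ᵥ x) * (y ⬝ᵥ C *ᵥ y) < 0) :
    ∃ t₁ t₂ : ℝ, t₁ < t₂ ∧ (y ⬝ᵥ C *ᵥ y) * (t₁ * t₂) = x ⬝ᵥ C *ᵥ x ∧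
      ∀ t ∈ ({t₁, t₂} : Set ℝ), (x + t • y) ⬝ᵥ C *ᵥ (x + t • y) = 0 ∧ C *ᵥ (x + t • y) ≠ 0 := by
  obtain ⟨t₁, t₂, hlt, hsum, hprod⟩ := exists_vieta_of_mul_neg (b := y ⬝ᵥ C *ᵥ x) h
  have hc : y ⬝ᵥ C *ᵥ y ≠ 0 := by rintro hc; simp [hc] at h
  refine ⟨t₁, t₂, hlt, hprod, fun t ht => ⟨?_, fun h0 => ?_⟩⟩
  · rw [hC.dotProduct_mulVec_add_smul]
    rcases ht with rfl | rfl <;> linear_combination t * hsum - hprod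
  · -- `t` is a simple root, so the derivative `2 y ⬝ᵥ C *ᵥ (x + t • y)` does not vanish there
    have hy : y ⬝ᵥ C *ᵥ (x + t • y) = 0 := by rw [h0, dotProduct_zero]
    simp only [mulVec_add, mulVec_smul, dotProduct_add, dotProduct_smul, smul_eq_mul] at hy
    rcases ht with rfl | rfl
    · have : (y ⬝ᵥ C *ᵥ y) * (t - t₂) = 0 := by linear_combination 2 * hy - hsum
      exact hc ((mul_eq_zero.1 this).resolve_right (sub_ne_zero.2 hlt.ne))
    · have : (y ⬝ᵥ C *ᵥ y) * (t - t₁) = 0 := by linear_combination 2 * hy - hsum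
      exact hc ((mul_eq_zero.1 this).resolve_right (sub_ne_zero.2 hlt.ne'))

theorem Matrix.IsSymm.mul_le_mul_of_nonneg_of_isotropic {A B : Matrix ι ι ℝ} (hA : A.IsSymm)
    (hB : B.IsSymm) (h : ∀ w, w ⬝ᵥ A *ᵥ w = 0 → 0 ≤ w ⬝ᵥ B *ᵥ w) {u v : ι → ℝ}
    (hu : 0 < u ⬝ᵥ A *ᵥ u) (hv : v ⬝ᵥ A *ᵥ v < 0) :
    (v ⬝ᵥ A *ᵥ v) * (u ⬝ᵥ B *ᵥ u) ≤ (u ⬝ᵥ A *ᵥ u) * (v ⬝ᵥ B *ᵥ v) := by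
  obtain ⟨t₁, t₂, hlt, hprod, hroots⟩ :=
    hA.exists_isotropic_add_smul (x := v) (y := u) (mul_neg_of_neg_of_pos hv hu)
  have ht : t₁ * t₂ < 0 := neg_of_mul_neg_right (hprod ▸ hv) hu.le
  have ht₁ : t₁ < 0 := by nlinarith
  have ht₂ : 0 < t₂ := by nlinarith
  have h₁ := h _ (hroots t₁ (by simp)).1
  have h₂ := h _ (hroots t₂ (by simp)).1
  rw [hB.dotProduct_mulVec_add_smul] at h₁ h₂
  -- eliminate the cross term `u ⬝ᵥ B *ᵥ v` between the values of the `B`-form at the two roots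
  have key : (t₂ - t₁) * ((u ⬝ᵥ A *ᵥ u) * (v ⬝ᵥ B *ᵥ v) - (v ⬝ᵥ A *ᵥ v) * (u ⬝ᵥ B *ᵥ u)) =
      (u ⬝ᵥ A *ᵥ u) * (t₂ * (v ⬝ᵥ B *ᵥ v + 2 * t₁ * (u ⬝ᵥ B *ᵥ v) + t₁ ^ 2 * (u ⬝ᵥ B *ᵥ u)) +
        -t₁ * (v ⬝ᵥ B *ᵥ v + 2 * t₂ * (u ⬝ᵥ B *ᵥ v) + t₂ ^ 2 * (u ⬝ᵥ B *ᵥ u))) := by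
    rw [← hprod]; ring
  have : 0 ≤ (t₂ - t₁) * ((u ⬝ᵥ A *ᵥ u) * (v ⬝ᵥ B *ᵥ v) - (v ⬝ᵥ A *ᵥ v) * (u ⬝ᵥ B *ᵥ u)) := by
    rw [key]
    exact mul_nonneg hu.le (add_nonneg (mul_nonneg ht₂.le h₁) (mul_nonneg (neg_nonneg.2 ht₁.le) h₂))
  linarith [(mul_nonneg_iff_of_pos_left (sub_pos.2 hlt)).1 this]

/-- Finsler's lemma. -/
theorem Matrix.IsSymm.exists_posSemidef_sub_smul {A B : Matrix ι ι ℝ} (hA : A.IsSymm)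
    (hB : B.IsSymm) (hpos : ∃ u, 0 < u ⬝ᵥ A *ᵥ u) (hneg : ∃ v, v ⬝ᵥ A *ᵥ v < 0)
    (h : ∀ w, w ⬝ᵥ A *ᵥ w = 0 → 0 ≤ w ⬝ᵥ B *ᵥ w) :
    ∃ μ : ℝ, (B - μ • A).PosSemidef := by
  obtain ⟨u, hu⟩ := hpos
  obtain ⟨v, hv⟩ := hneg
  have hratio : ∀ {x y : ι → ℝ}, x ⬝ᵥ A *ᵥ x < 0 → 0 < y ⬝ᵥ A *ᵥ y →
      x ⬝ᵥ B *ᵥ x / (x ⬝ᵥ A *ᵥ x) ≤ y ⬝ᵥ B *ᵥ y / (y ⬝ᵥ A *ᵥ y) := fun hx hy => by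
    rw [div_le_iff_of_neg hx, div_mul_eq_mul_div, div_le_iff₀ hy]
    linarith [hA.mul_le_mul_of_nonneg_of_isotropic hB h hy hx]
  set S := (fun w => w ⬝ᵥ B *ᵥ w / (w ⬝ᵥ A *ᵥ w)) '' {w | w ⬝ᵥ A *ᵥ w < 0}
  have hS : S.Nonempty := ⟨_, v, hv, rfl⟩
  have hSbdd : BddAbove S := ⟨_, by rintro _ ⟨w, hw, rfl⟩; exact hratio hw hu⟩
  refine ⟨sSup S, .of_dotProduct_mulVec_nonneg (by simpa using hB.sub (hA.smul _)) fun z => ?_⟩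
  have : sSup S * (z ⬝ᵥ A *ᵥ z) ≤ z ⬝ᵥ B *ᵥ z := by
    rcases lt_trichotomy (z ⬝ᵥ A *ᵥ z) 0 with hz | hz | hz
    · exact (div_le_iff_of_neg hz).1 (le_csSup hSbdd ⟨z, hz, rfl⟩)
    · simpa [hz] using h z hz
    · exact (le_div_iff₀ hz).1 (csSup_le hS (by rintro _ ⟨w, hw, rfl⟩; exact hratio hw hz))
  simpa [sub_mulVec, smul_mulVec, dotProduct_sub] using this

theorem Matrix.IsSymm.rank_le_two_of_hyperbolic_pair {A : Matrix ι ι ℝ} (hA : A.IsSymm)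
    {p q : ι → ℝ} (hp : p ⬝ᵥ A *ᵥ p = 0) (hq : q ⬝ᵥ A *ᵥ q = 0) (hpq : p ⬝ᵥ A *ᵥ q ≠ 0)
    (h : ∀ y, y ⬝ᵥ A *ᵥ p = 0 → y ⬝ᵥ A *ᵥ q = 0 → y ⬝ᵥ A *ᵥ y = 0) : A.rank ≤ 2 := by
  set c := p ⬝ᵥ A *ᵥ q
  have hqp : q ⬝ᵥ A *ᵥ p = c := hA.dotProduct_mulVec_comm q p
  -- the projection onto the `A`-orthogonal complement of `p` and `q`
  set π : (ι → ℝ) → ι → ℝ := fun x => x - (x ⬝ᵥ A *ᵥ q / c) • p - (x ⬝ᵥ A *ᵥ p / c) • q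
  have hπ : ∀ x, x = π x + (x ⬝ᵥ A *ᵥ q / c) • p + (x ⬝ᵥ A *ᵥ p / c) • q := fun x => by
    simp only [π]; abel
  have hπp : ∀ x, π x ⬝ᵥ A *ᵥ p = 0 := fun x => by
    simp only [π, sub_dotProduct, smul_dotProduct, smul_eq_mul, hp, hqp]
    field_simp
    ring
  have hπq : ∀ x, π x ⬝ᵥ A *ᵥ q = 0 := fun x => by
    simp only [π, sub_dotProduct, smul_dotProduct, smul_eq_mul, hq]
    field_simp
    ring
  have hππ : ∀ x x', π x ⬝ᵥ A *ᵥ π x' = 0 := fun x x' =>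
    hA.dotProduct_mulVec_eq_zero_of_isotropic (h _ (hπp x) (hπq x)) (h _ (hπp x') (hπq x'))
      (h _ (by rw [add_dotProduct, hπp, hπp, add_zero])
        (by rw [add_dotProduct, hπq, hπq, add_zero]))
  have hker : ∀ x, A *ᵥ π x = 0 := fun x => by
    have horth : ∀ u, u ⬝ᵥ A *ᵥ π x = 0 := fun u => by
      rw [hπ u]
      simp only [add_dotProduct, smul_dotProduct, smul_eq_mul, hππ, hA.dotProduct_mulVec_comm p,
        hA.dotProduct_mulVec_comm q, hπp, hπq]
      ring
    exact dotProduct_self_eq_zero.1 (horth _)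
  have hrange : LinearMap.range A.mulVecLin ≤ Submodule.span ℝ {A *ᵥ p, A *ᵥ q} := by
    rintro _ ⟨x, rfl⟩
    rw [mulVecLin_apply, hπ x, mulVec_add, mulVec_add, hker, zero_add, mulVec_smul, mulVec_smul]
    exact Submodule.mem_span_pair.2 ⟨_, _, rfl⟩
  calc A.rank ≤ Module.finrank ℝ (Submodule.span ℝ {A *ᵥ p, A *ᵥ q}) :=
        Submodule.finrank_mono hrange
    _ ≤ 2 := finrank_span_pair_le_two _ _

theorem Matrix.IsSymm.exists_isotropic_mulVec_ne_zero_dotProduct_ne_zero {C : Matrix ι ι ℝ}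
    (hC : C.IsSymm) (hpos : ∃ p, 0 < p ⬝ᵥ C *ᵥ p) (hneg : ∃ q, q ⬝ᵥ C *ᵥ q < 0) {m : ι → ℝ}
    (hm : m ≠ 0) : ∃ v, v ⬝ᵥ C *ᵥ v = 0 ∧ C *ᵥ v ≠ 0 ∧ v ⬝ᵥ m ≠ 0 := by
  obtain ⟨p, hp⟩ := hpos
  obtain ⟨q, hq⟩ := hneg
  have hmm : m ⬝ᵥ m ≠ 0 := fun h => hm (dotProduct_self_eq_zero.1 h)
  obtain ⟨x, y, hxy, hm'⟩ : ∃ x y : ι → ℝ, (x ⬝ᵥ C *ᵥ x) * (y ⬝ᵥ C *ᵥ y) < 0 ∧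
      (x ⬝ᵥ m ≠ 0 ∨ y ⬝ᵥ m ≠ 0) := by
    by_cases hpm : p ⬝ᵥ m = 0
    · rcases lt_or_ge (m ⬝ᵥ C *ᵥ m) 0 with hCm | hCm
      · exact ⟨p, m, mul_neg_of_pos_of_neg hp hCm, Or.inr hmm⟩
      -- the values at `p + m` and `p - m` add up to `2 (p ⬝ᵥ C *ᵥ p + m ⬝ᵥ C *ᵥ m) > 0`
      obtain ⟨ε, hε, hpε⟩ : ∃ ε : ℝ, ε ≠ 0 ∧ 0 < (p + ε • m) ⬝ᵥ C *ᵥ (p + ε • m) := by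
        by_contra! h
        have h₁ := h 1 one_ne_zero
        have h₂ := h (-1) (by norm_num)
        rw [hC.dotProduct_mulVec_add_smul] at h₁ h₂
        linarith
      refine ⟨p + ε • m, q, mul_neg_of_pos_of_neg hpε hq, Or.inl ?_⟩
      simpa [add_dotProduct, hpm, hε] using hmm
    · exact ⟨p, q, mul_neg_of_pos_of_neg hp hq, Or.inl hpm⟩
  obtain ⟨t₁, t₂, hlt, -, hroots⟩ := hC.exists_isotropic_add_smul hxy
  have hdiff : (x + t₁ • y) ⬝ᵥ m - (x + t₂ • y) ⬝ᵥ m = (t₁ - t₂) * (y ⬝ᵥ m) := by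
    simp only [add_dotProduct, smul_dotProduct, smul_eq_mul]; ring
  by_cases h₁ : (x + t₁ • y) ⬝ᵥ m = 0
  · refine ⟨_, (hroots t₂ (by simp)).1, (hroots t₂ (by simp)).2, fun h₂ => ?_⟩
    rw [h₁, h₂, sub_zero, zero_eq_mul] at hdiff
    have hy : y ⬝ᵥ m = 0 := hdiff.resolve_left (sub_ne_zero.2 hlt.ne)
    simp [add_dotProduct, hy] at h₁
    exact hm'.elim (· h₁) (· hy)
  · exact ⟨_, (hroots t₁ (by simp)).1, (hroots t₁ (by simp)).2, h₁⟩

theorem Matrix.IsSymm.exists_isotropic_mulVec_ne_zero_of_isotropic_plane {A B : Matrix ι ι ℝ}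
    (hA : A.IsSymm) (hB : B.IsSymm) {p q : ι → ℝ} (hp : p ⬝ᵥ A *ᵥ p = 0)
    (hq : q ⬝ᵥ A *ᵥ q = 0) (hpq : p ⬝ᵥ A *ᵥ q = 0)
    (hBpq : (p ⬝ᵥ B *ᵥ p) * (q ⬝ᵥ B *ᵥ q) < 0) :
    ∃ z, z ⬝ᵥ A *ᵥ z = 0 ∧ z ⬝ᵥ B *ᵥ z = 0 ∧ B *ᵥ z ≠ 0 := by
  obtain ⟨t, _, -, -, hroots⟩ := hB.exists_isotropic_add_smul hBpq
  refine ⟨p + t • q, ?_, hroots t (by simp)⟩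
  rw [hA.dotProduct_mulVec_add_smul, hp, hq, hA.dotProduct_mulVec_comm, hpq]
  ring

theorem Matrix.IsSymm.exists_isotropic_mulVec_ne_zero_of_hyperbolic_pair {A B : Matrix ι ι ℝ}
    (hA : A.IsSymm) {p q y : ι → ℝ} (hp : p ⬝ᵥ A *ᵥ p = 0)
    (hq : q ⬝ᵥ A *ᵥ q = 0) (hpq : p ⬝ᵥ A *ᵥ q ≠ 0) (hyp : y ⬝ᵥ A *ᵥ p = 0)
    (hyq : y ⬝ᵥ A *ᵥ q = 0) (hy : y ⬝ᵥ A *ᵥ y ≠ 0)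
    (hBpq : (p ⬝ᵥ B *ᵥ p) * (q ⬝ᵥ B *ᵥ q) < 0) :
    ∃ z, z ⬝ᵥ A *ᵥ z = 0 ∧ z ⬝ᵥ B *ᵥ z = 0 ∧ A *ᵥ z ≠ 0 := by
  set c := p ⬝ᵥ A *ᵥ q
  set κ := -(y ⬝ᵥ A *ᵥ y) / (2 * c)
  have hκ : κ * (2 * c) = -(y ⬝ᵥ A *ᵥ y) := div_mul_cancel₀ _ (by simpa using hpq)
  have hκ0 : κ ≠ 0 := by rintro h; simp [h, hy] at hκ
  have hqp : q ⬝ᵥ A *ᵥ p = c := hA.dotProduct_mulVec_comm q p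
  have hpy : p ⬝ᵥ A *ᵥ y = 0 := by rw [hA.dotProduct_mulVec_comm, hyp]
  have hqy : q ⬝ᵥ A *ᵥ y = 0 := by rw [hA.dotProduct_mulVec_comm, hyq]
  -- a path from `p` to `κ • q` inside the cone `{z ⬝ᵥ A *ᵥ z = 0}`: there
  -- `z ⬝ᵥ A *ᵥ z = t² (1 - t)² (2 κ c + y ⬝ᵥ A *ᵥ y)`
  set γ : ℝ → ι → ℝ := fun t => (1 - t) ^ 2 • p + (κ * t ^ 2) • q + (t * (1 - t)) • y
  have hγA : ∀ t, γ t ⬝ᵥ A *ᵥ γ t = 0 := fun t => by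
    simp only [γ, mulVec_add, mulVec_smul, dotProduct_add, add_dotProduct, dotProduct_smul,
      smul_dotProduct, smul_eq_mul, hp, hq, hqp, hpy, hqy, hyp, hyq]
    linear_combination t ^ 2 * (1 - t) ^ 2 * hκ
  have hγ : Continuous fun t => γ t ⬝ᵥ B *ᵥ γ t := by fun_prop
  have hγ₀ : γ 0 = p := by simp [γ]
  have hγ₁ : γ 1 = κ • q := by simp [γ]
  obtain ⟨t, -, ht⟩ : (0 : ℝ) ∈ (fun t => γ t ⬝ᵥ B *ᵥ γ t) '' Set.uIcc 0 1 := by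
    refine intermediate_value_uIcc hγ.continuousOn ?_
    simp only [hγ₀, hγ₁, mulVec_smul, dotProduct_smul, smul_dotProduct, smul_eq_mul,
      Set.mem_uIcc]
    have : 0 < κ * κ := mul_self_pos.2 hκ0
    rcases le_total (p ⬝ᵥ B *ᵥ p) 0 with h | h
    · exact Or.inl ⟨h, by nlinarith⟩
    · exact Or.inr ⟨by nlinarith, h⟩
  refine ⟨γ t, hγA t, ht, fun h => ?_⟩
  have hp' : p ⬝ᵥ A *ᵥ γ t = κ * t ^ 2 * c := by
    simp only [γ, mulVec_add, mulVec_smul, dotProduct_add, dotProduct_smul, smul_eq_mul, hp, hpy]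
    ring
  have hq' : q ⬝ᵥ A *ᵥ γ t = (1 - t) ^ 2 * c := by
    simp only [γ, mulVec_add, mulVec_smul, dotProduct_add, dotProduct_smul, smul_eq_mul, hq, hqp,
      hqy]
    ring
  rw [h, dotProduct_zero] at hp' hq'
  have ht₀ : t = 0 := by simpa [hκ0, hpq] using hp'.symm
  have ht₁ : 1 - t = 0 := by simpa [hpq] using hq'.symm
  linarith

def IsNondissipative (V : Submodule ℝ (Matrix ι ι ℝ)) : Prop :=
  ∀ F ∈ V, F.PosSemidef → F = 0

namespace IsNondissipative

variable {V : Submodule ℝ (Matrix ι ι ℝ)} {A B F : Matrix ι ι ℝ}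

theorem exists_neg (hV : IsNondissipative V) (hF : F ∈ V) (hFs : F.IsSymm) (hF0 : F ≠ 0) :
    ∃ x, x ⬝ᵥ F *ᵥ x < 0 := by
  by_contra! h
  refine hF0 (hV F hF (.of_dotProduct_mulVec_nonneg (by simpa using hFs) fun x => ?_))
  simpa using h x

theorem exists_pos (hV : IsNondissipative V) (hF : F ∈ V) (hFs : F.IsSymm) (hF0 : F ≠ 0) :
    ∃ x, 0 < x ⬝ᵥ F *ᵥ x := by
  obtain ⟨x, hx⟩ := hV.exists_neg (neg_mem hF) hFs.neg (neg_ne_zero.2 hF0)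
  exact ⟨x, by simpa [neg_mulVec] using hx⟩

theorem exists_isotropic_neg (hV : IsNondissipative V) (hAV : A ∈ V) (hBV : B ∈ V)
    (hA : A.IsSymm) (hB : B.IsSymm) (hA0 : A ≠ 0) (hAB : ∀ μ : ℝ, μ • A ≠ B) :
    ∃ z, z ⬝ᵥ A *ᵥ z = 0 ∧ z ⬝ᵥ B *ᵥ z < 0 := by
  by_contra! h
  obtain ⟨μ, hμ⟩ := hA.exists_posSemidef_sub_smul hB (hV.exists_pos hAV hA hA0)
    (hV.exists_neg hAV hA hA0) h
  exact hAB μ (sub_eq_zero.1 (hV _ (sub_mem hBV (Submodule.smul_mem _ _ hAV)) hμ)).symm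

end IsNondissipative

def IsTransversalPoint (A B : Matrix ι ι ℝ) (z : ι → ℝ) : Prop :=
  z ⬝ᵥ A *ᵥ z = 0 ∧ z ⬝ᵥ B *ᵥ z = 0 ∧ LinearIndependent ℝ ![A *ᵥ z, B *ᵥ z]

theorem isTransversalPoint_iff {A B : Matrix ι ι ℝ} (hAB : LinearIndependent ℝ ![A, B])
    (z : ι → ℝ) :
    IsTransversalPoint A B z ↔ (∀ F ∈ Submodule.span ℝ {A, B}, z ⬝ᵥ F *ᵥ z = 0) ∧
      ∀ F ∈ Submodule.span ℝ {A, B}, F *ᵥ z = 0 → F = 0 := by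
  simp only [IsTransversalPoint, Submodule.mem_span_pair, LinearIndependent.pair_iff] at hAB ⊢
  constructor
  · rintro ⟨hA, hB, hli⟩
    refine ⟨?_, ?_⟩
    · rintro _ ⟨a, b, rfl⟩
      simp [add_mulVec, smul_mulVec, hA, hB]
    · rintro _ ⟨a, b, rfl⟩ h
      obtain ⟨rfl, rfl⟩ := hli a b (by simpa [add_mulVec, smul_mulVec] using h)
      simp
  · rintro ⟨hQ, hker⟩
    refine ⟨hQ A ⟨1, 0, by simp⟩, hQ B ⟨0, 1, by simp⟩, fun s t h => hAB s t ?_⟩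
    refine hker _ ⟨s, t, rfl⟩ ?_
    simpa [add_mulVec, smul_mulVec] using h

theorem IsTransversalPoint.linearIndependent {A B : Matrix ι ι ℝ} {z : ι → ℝ}
    (h : IsTransversalPoint A B z) : LinearIndependent ℝ ![A, B] := by
  refine LinearIndependent.pair_iff.2 fun s t hst => LinearIndependent.pair_iff.1 h.2.2 s t ?_
  simpa [add_mulVec, smul_mulVec] using congrArg (· *ᵥ z) hst

theorem IsTransversalPoint.of_mem_span {A B C D : Matrix ι ι ℝ} {z : ι → ℝ}
    (hAB : LinearIndependent ℝ ![A, B]) (hC : C ∈ Submodule.span ℝ {A, B})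
    (hD : D ∈ Submodule.span ℝ {A, B}) (h : IsTransversalPoint C D z) :
    IsTransversalPoint A B z := by
  have hCD := h.linearIndependent
  rwa [isTransversalPoint_iff hAB, ← span_pair_eq_of_linearIndependent hCD hC hD,
    ← isTransversalPoint_iff hCD]

theorem Matrix.IsSymm.exists_isTransversalPoint_of_mulVec_eq_zero {C D : Matrix ι ι ℝ}
    (hC : C.IsSymm) (hD : D.IsSymm) {z₀ v : ι → ℝ} (hCz₀ : C *ᵥ z₀ = 0)
    (hDz₀ : z₀ ⬝ᵥ D *ᵥ z₀ = 0) (hv : v ⬝ᵥ C *ᵥ v = 0) (hCv : C *ᵥ v ≠ 0)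
    (hvD : v ⬝ᵥ D *ᵥ z₀ ≠ 0) : ∃ z, IsTransversalPoint D C z := by
  set r := -(v ⬝ᵥ D *ᵥ v) / (2 * (v ⬝ᵥ D *ᵥ z₀))
  have hr : r * (2 * (v ⬝ᵥ D *ᵥ z₀)) = -(v ⬝ᵥ D *ᵥ v) := div_mul_cancel₀ _ (by simpa using hvD)
  have hz₀C : z₀ ⬝ᵥ C *ᵥ v = 0 := by rw [hC.dotProduct_mulVec_comm, hCz₀, dotProduct_zero]
  have hCz : C *ᵥ (v + r • z₀) = C *ᵥ v := by simp [mulVec_add, mulVec_smul, hCz₀]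
  refine ⟨v + r • z₀, ?_, ?_, LinearIndependent.pair_iff.2 fun s t hst => ?_⟩
  · rw [hD.dotProduct_mulVec_add_smul, hDz₀, hD.dotProduct_mulVec_comm z₀]
    linear_combination hr
  · rw [hC.dotProduct_mulVec_add_smul, hv, hz₀C, hCz₀, dotProduct_zero]
    ring
  -- pairing with `z₀` kills the `C`-component but not the `D`-component
  have hs : s * (v ⬝ᵥ D *ᵥ z₀) = 0 := by
    have := congrArg (z₀ ⬝ᵥ ·) hst
    simp only [hCz, mulVec_add, mulVec_smul, dotProduct_add, dotProduct_smul, smul_eq_mul,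
      hDz₀, hz₀C, dotProduct_zero, hD.dotProduct_mulVec_comm z₀ v] at this
    linear_combination this
  obtain rfl : s = 0 := (mul_eq_zero.1 hs).resolve_right hvD
  rw [zero_smul, zero_add, hCz, smul_eq_zero] at hst
  exact ⟨rfl, hst.resolve_right hCv⟩

theorem IsNondissipative.exists_isTransversalPoint_of_common_isotropic {A B : Matrix ι ι ℝ}
    (hV : IsNondissipative (Submodule.span ℝ {A, B})) (hA : A.IsSymm) (hB : B.IsSymm)
    (hAB : LinearIndependent ℝ ![A, B]) {z₁ : ι → ℝ} (hzA : z₁ ⬝ᵥ A *ᵥ z₁ = 0)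
    (hzB : z₁ ⬝ᵥ B *ᵥ z₁ = 0) (hz₁ : A *ᵥ z₁ ≠ 0 ∨ B *ᵥ z₁ ≠ 0) :
    ∃ z, IsTransversalPoint A B z := by
  by_cases hli : LinearIndependent ℝ ![A *ᵥ z₁, B *ᵥ z₁]
  · exact ⟨z₁, hzA, hzB, hli⟩
  obtain ⟨s, t, hst, hst0⟩ : ∃ s t : ℝ, s • A *ᵥ z₁ + t • B *ᵥ z₁ = 0 ∧ ¬(s = 0 ∧ t = 0) := by
    simpa [LinearIndependent.pair_iff] using hli
  set C := s • A + t • B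
  have hCV : C ∈ Submodule.span ℝ {A, B} := Submodule.mem_span_pair.2 ⟨s, t, rfl⟩
  have hCs : C.IsSymm := (hA.smul s).add (hB.smul t)
  have hC0 : C ≠ 0 := fun h => hst0 (LinearIndependent.pair_iff.1 hAB s t h)
  have hCz : C *ᵥ z₁ = 0 := by simpa [C, add_mulVec, smul_mulVec] using hst
  obtain ⟨D, hDV, hDs, hDz, hDz₁⟩ : ∃ D ∈ Submodule.span ℝ {A, B},
      D.IsSymm ∧ z₁ ⬝ᵥ D *ᵥ z₁ = 0 ∧ D *ᵥ z₁ ≠ 0 := by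
    rcases hz₁ with h | h
    · exact ⟨A, Submodule.subset_span (by simp), hA, hzA, h⟩
    · exact ⟨B, Submodule.subset_span (by simp), hB, hzB, h⟩
  obtain ⟨v, hv, hCv, hvD⟩ := hCs.exists_isotropic_mulVec_ne_zero_dotProduct_ne_zero
    (hV.exists_pos hCV hCs hC0) (hV.exists_neg hCV hCs hC0) hDz₁
  obtain ⟨z, hz⟩ := hCs.exists_isTransversalPoint_of_mulVec_eq_zero hDs hCz hDz hv hCv hvD
  exact ⟨z, hz.of_mem_span hAB hDV hCV⟩

theorem IsNondissipative.exists_isTransversalPoint_of_three_le_rank {A B : Matrix ι ι ℝ}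
    (hV : IsNondissipative (Submodule.span ℝ {A, B})) (hA : A.IsSymm) (hB : B.IsSymm)
    (hAB : LinearIndependent ℝ ![A, B]) (hrank : 3 ≤ A.rank) :
    ∃ z, IsTransversalPoint A B z := by
  have hA0 : A ≠ 0 := by simpa using hAB.ne_zero 0
  have hAV : A ∈ Submodule.span ℝ {A, B} := Submodule.subset_span (by simp)
  have hBV : B ∈ Submodule.span ℝ {A, B} := Submodule.subset_span (by simp)
  have hBA : ∀ μ : ℝ, μ • A ≠ B := (LinearIndependent.pair_iff' hA0).1 hAB
  obtain ⟨q, hqA, hqB⟩ := hV.exists_isotropic_neg hAV hBV hA hB hA0 hBA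
  obtain ⟨p, hpA, hpB⟩ := hV.exists_isotropic_neg hAV (neg_mem hBV) hA hB.neg hA0
    fun μ h => hBA (-μ) (by rw [neg_smul, h, neg_neg])
  have hBpq : (p ⬝ᵥ B *ᵥ p) * (q ⬝ᵥ B *ᵥ q) < 0 :=
    mul_neg_of_pos_of_neg (by simpa [neg_mulVec] using hpB) hqB
  obtain ⟨z₁, hz₁A, hz₁B, hz₁⟩ : ∃ z₁, z₁ ⬝ᵥ A *ᵥ z₁ = 0 ∧ z₁ ⬝ᵥ B *ᵥ z₁ = 0 ∧
      (A *ᵥ z₁ ≠ 0 ∨ B *ᵥ z₁ ≠ 0) := by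
    by_cases hpq : p ⬝ᵥ A *ᵥ q = 0
    · obtain ⟨z₁, h₁, h₂, h₃⟩ :=
        hA.exists_isotropic_mulVec_ne_zero_of_isotropic_plane hB hpA hqA hpq hBpq
      exact ⟨z₁, h₁, h₂, Or.inr h₃⟩
    · obtain ⟨y, hyp, hyq, hy⟩ : ∃ y, y ⬝ᵥ A *ᵥ p = 0 ∧ y ⬝ᵥ A *ᵥ q = 0 ∧ y ⬝ᵥ A *ᵥ y ≠ 0 := by
        by_contra! h
        exact absurd (hA.rank_le_two_of_hyperbolic_pair hpA hqA hpq h) (by omega)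
      obtain ⟨z₁, h₁, h₂, h₃⟩ :=
        hA.exists_isotropic_mulVec_ne_zero_of_hyperbolic_pair hpA hqA hpq hyp hyq hy hBpq
      exact ⟨z₁, h₁, h₂, Or.inl h₃⟩
  exact hV.exists_isTransversalPoint_of_common_isotropic hA hB hAB hz₁A hz₁B hz₁

theorem nondissipative_pair_transversal_point {n : ℕ}
    (A B : Matrix (Fin n) (Fin n) ℝ) (hA : A.IsSymm) (hB : B.IsSymm)
    (hnd : ∀ F ∈ Submodule.span ℝ ({A, B} : Set (Matrix (Fin n) (Fin n) ℝ)),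
      F.PosSemidef → F = 0)
    (hrank : ∃ F ∈ Submodule.span ℝ ({A, B} : Set (Matrix (Fin n) (Fin n) ℝ)), 3 ≤ F.rank)
    (hli : LinearIndependent ℝ ![A, B]) :
    ∃ z : Fin n → ℝ, z ⬝ᵥ A.mulVec z = 0 ∧ z ⬝ᵥ B.mulVec z = 0 ∧
      LinearIndependent ℝ ![A.mulVec z, B.mulVec z] := by
  obtain ⟨F, hFV, hF⟩ := hrank
  have hF0 : F ≠ 0 := by rintro rfl; simp at hF
  obtain ⟨G, hG, hFG⟩ := hli.exists_linearIndependent_pair_of_ne_zero hF0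
  have hGV : G ∈ Submodule.span ℝ {A, B} := Submodule.subset_span hG
  have hFs : F.IsSymm := by
    obtain ⟨a, b, rfl⟩ := Submodule.mem_span_pair.1 hFV
    exact (hA.smul a).add (hB.smul b)
  have hGs : G.IsSymm := by rcases hG with rfl | rfl <;> assumption
  have hV : IsNondissipative (Submodule.span ℝ {F, G}) := by
    rw [span_pair_eq_of_linearIndependent hFG hFV hGV]
    exact hnd
  obtain ⟨z, hz⟩ := hV.exists_isTransversalPoint_of_three_le_rank hFs hGs hFG hF
  exact ⟨z, hz.of_mem_span hli hFV hGV⟩
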